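/- For a fixed nominal positive semidefinite matrix Ẑ and radius ρ ≥ 0, the set {Z ∈ S_+^d : G(Z,Ẑ) ≤ ρ} equals the set of Z ∈ S_+^d for which there exists E ∈ S_+^d with Tr(Z + Ẑ - 2E) ≤ ρ² and the block matrix [[Ẑ^{1/2} Z Ẑ^{1/2}, E],[E, I]] positive semidefinite. -/

import Mathlib

open Matrix

/-- The positive semidefinite square root of a matrix (zero if the matrix is
not positive semidefinite). -/
noncomputable def psdSqrt {d : ℕ} (A : Matrix (Fin d) (Fin d) ℝ) :
    Matrix (Fin d) (Fin d) ℝ := by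
  classical exact if h : A.PosSemidef then
    (h.1.eigenvectorUnitary.1 * diagonal ((↑) ∘ (√·) ∘ h.1.eigenvalues) *
      (star h.1.eigenvectorUnitary : Matrix (Fin d) (Fin d) ℝ)) else 0

/-- The Gelbrich distance between covariance matrices. -/
noncomputable def gelbrich {d : ℕ} (S1 S2 : Matrix (Fin d) (Fin d) ℝ) : ℝ :=
  Real.sqrt (S1 + S2 - (2 : ℝ) • psdSqrt (psdSqrt S2 * S1 * psdSqrt S2)).trace

/-! With `M = Ẑ^{1/2} Z Ẑ^{1/2}`, the Schur complement turns positivity of `[[M, E], [E, I]]` into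
`E² ⪯ M`. For `E ⪰ 0` this forces `E ⪯ M^{1/2}` (the square root is operator monotone), so
`Tr E ≤ Tr M^{1/2}`, with equality at `E = M^{1/2}`. Hence the trace constraint can be met exactly
when `G(Z, Ẑ)² = Tr(Z + Ẑ - 2 M^{1/2}) ≤ ρ²`. -/

open scoped MatrixOrder ComplexOrder

section

variable {𝕜 m n : Type*} [RCLike 𝕜] [Fintype m] [Fintype n]

/- If `μ < 0` were an eigenvalue of `B - A` with eigenvector `v`, then
`B * B - A * A = (B - A) * B + A * (B - A)` gives `v⋆(B² - A²)v = μ v⋆(A + B)v`, forcing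
`v⋆Av = v⋆Bv = 0` and hence `μ ‖v‖² = v⋆(B - A)v = 0`. -/
theorem Matrix.PosSemidef.le_of_mul_self_le_mul_self {A B : Matrix n n 𝕜}
    (hA : A.PosSemidef) (hB : B.PosSemidef) (h : A * A ≤ B * B) : A ≤ B := by
  classical
  have hD : (B - A).IsHermitian := hB.1.sub hA.1
  rw [le_iff, hD.posSemidef_iff_eigenvalues_nonneg]
  intro i
  set μ := hD.eigenvalues i
  set v : n → 𝕜 := ⇑(hD.eigenvectorBasis i)
  have hv : (B - A) *ᵥ v = (μ : 𝕜) • v := by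
    rw [← RCLike.real_smul_eq_coe_smul]; exact hD.mulVec_eigenvectorBasis i
  have hv_star : star v ᵥ* (B - A) = (μ : 𝕜) • star v := by
    rw [← hD.eq, ← star_mulVec, hv, star_smul, RCLike.star_def, RCLike.conj_ofReal]
  have hsq : star v ⬝ᵥ (B * B - A * A) *ᵥ v =
      μ * (star v ⬝ᵥ B *ᵥ v + star v ⬝ᵥ A *ᵥ v) := by
    have : B * B - A * A = (B - A) * B + A * (B - A) := by noncomm_ring
    rw [this, add_mulVec, ← mulVec_mulVec, ← mulVec_mulVec, dotProduct_add, dotProduct_mulVec,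
      hv_star, hv, mulVec_smul, smul_dotProduct, dotProduct_smul, smul_eq_mul, smul_eq_mul, mul_add]
  have hdiff : star v ⬝ᵥ B *ᵥ v - star v ⬝ᵥ A *ᵥ v = μ * (star v ⬝ᵥ v) := by
    rw [← dotProduct_sub, ← sub_mulVec, hv, dotProduct_smul, smul_eq_mul]
  have hv_pos : 0 < RCLike.re (star v ⬝ᵥ v) := by
    refine (RCLike.pos_iff.mp (dotProduct_star_self_pos_iff.mpr ?_)).1
    exact (WithLp.ofLp_eq_zero 2).ne.2 (hD.eigenvectorBasis.orthonormal.ne_zero i)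
  have hq := (le_iff.mp h).re_dotProduct_nonneg v
  have ha := hA.re_dotProduct_nonneg v
  have hb := hB.re_dotProduct_nonneg v
  rw [hsq] at hq
  replace hdiff := congrArg RCLike.re hdiff
  simp only [map_sub, map_add, RCLike.re_ofReal_mul] at hq hdiff
  by_contra! hμ
  have hab := nonpos_of_mul_nonneg_right hq hμ
  linarith [mul_neg_of_neg_of_pos hμ hv_pos]

theorem Matrix.fromBlocks_one_posSemidef_iff [DecidableEq n] {A : Matrix m m 𝕜}
    {B : Matrix m n 𝕜} : (fromBlocks A B Bᴴ 1).PosSemidef ↔ (A - B * Bᴴ).PosSemidef := by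
  let : Invertible (1 : Matrix n n 𝕜) := invertibleOne
  simpa using PosDef.fromBlocks₂₂ A B (PosDef.one (n := n) (R := 𝕜))

end

section

variable {d : ℕ}

theorem psdSqrt_eq_cfcSqrt {A : Matrix (Fin d) (Fin d) ℝ} (hA : A.PosSemidef) :
    psdSqrt A = CFC.sqrt A := by
  rw [psdSqrt, dif_pos hA, CFC.sqrt_eq_cfc, cfc_nnreal_eq_real _ A, hA.1.cfc_eq]
  simp [IsHermitian.cfc, Unitary.conjStarAlgAut_apply, Function.comp_def,
    max_eq_left (hA.eigenvalues_nonneg _)]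

theorem posSemidef_psdSqrt (A : Matrix (Fin d) (Fin d) ℝ) : (psdSqrt A).PosSemidef := by
  by_cases hA : A.PosSemidef
  · rw [psdSqrt_eq_cfcSqrt hA]
    exact (CFC.sqrt_nonneg A).posSemidef
  · rw [psdSqrt, dif_neg hA]
    exact .zero

theorem psdSqrt_mul_self {A : Matrix (Fin d) (Fin d) ℝ} (hA : A.PosSemidef) :
    psdSqrt A * psdSqrt A = A := by
  rw [psdSqrt_eq_cfcSqrt hA]
  exact CFC.sqrt_mul_sqrt_self A hA.nonneg

theorem fromBlocks_psdSqrt_posSemidef {M : Matrix (Fin d) (Fin d) ℝ} (hM : M.PosSemidef) :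
    (fromBlocks M (psdSqrt M) (psdSqrt M) 1).PosSemidef := by
  have hS := (posSemidef_psdSqrt M).1.eq
  nth_rw 2 [← hS]
  rw [fromBlocks_one_posSemidef_iff, hS, psdSqrt_mul_self hM, sub_self]
  exact .zero

theorem le_psdSqrt_of_fromBlocks_posSemidef {M E : Matrix (Fin d) (Fin d) ℝ}
    (hM : M.PosSemidef) (hE : E.PosSemidef) (h : (fromBlocks M E E 1).PosSemidef) :
    E ≤ psdSqrt M := by
  refine hE.le_of_mul_self_le_mul_self (posSemidef_psdSqrt M) ?_
  have h' : (fromBlocks M E Eᴴ 1).PosSemidef := by rwa [hE.1.eq]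
  rw [psdSqrt_mul_self hM, le_iff]
  simpa only [hE.1.eq] using fromBlocks_one_posSemidef_iff.mp h'

end

theorem gelbrich_ball_sdp_representation_general {d : ℕ}
    (Zh : Matrix (Fin d) (Fin d) ℝ)
    (ρ : ℝ) (hρ : 0 ≤ ρ) :
    {Z : Matrix (Fin d) (Fin d) ℝ | Z.PosSemidef ∧ gelbrich Z Zh ≤ ρ} =
    {Z : Matrix (Fin d) (Fin d) ℝ | Z.PosSemidef ∧
      ∃ E : Matrix (Fin d) (Fin d) ℝ, E.PosSemidef ∧
        (Z + Zh - (2 : ℝ) • E).trace ≤ ρ ^ 2 ∧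
        (Matrix.fromBlocks (psdSqrt Zh * Z * psdSqrt Zh) E E 1).PosSemidef} := by
  ext Z
  simp only [Set.mem_ofPred_eq, and_congr_right_iff]
  intro hZ
  have hM : (psdSqrt Zh * Z * psdSqrt Zh).PosSemidef := by
    have := hZ.conjTranspose_mul_mul_same (psdSqrt Zh)
    rwa [(posSemidef_psdSqrt Zh).1.eq] at this
  rw [gelbrich, Real.sqrt_le_left hρ]
  constructor
  · exact fun h ↦ ⟨_, posSemidef_psdSqrt _, h, fromBlocks_psdSqrt_posSemidef hM⟩
  · rintro ⟨E, hE, htr, hblock⟩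
    have hES := (le_iff.mp (le_psdSqrt_of_fromBlocks_posSemidef hM hE hblock)).trace_nonneg
    simp only [trace_sub, trace_add, trace_smul, smul_eq_mul] at hES htr ⊢
    linarith

/-- SDP representation of the Gelbrich ball: for a nominal positive
semidefinite matrix `Zh` and radius `ρ ≥ 0`, the set of positive semidefinite
`Z` with `G(Z, Zh) ≤ ρ` coincides with the set of positive semidefinite `Z`
for which there is `E ⪰ 0` with `Tr(Z + Zh - 2E) ≤ ρ²` and
`[[Zh^{1/2} Z Zh^{1/2}, E], [E, I]] ⪰ 0`. -/
theorem gelbrich_ball_sdp_representation {d : ℕ}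
    (Zh : Matrix (Fin d) (Fin d) ℝ) (hZh : Zh.PosSemidef)
    (ρ : ℝ) (hρ : 0 ≤ ρ) :
    {Z : Matrix (Fin d) (Fin d) ℝ | Z.PosSemidef ∧ gelbrich Z Zh ≤ ρ} =
    {Z : Matrix (Fin d) (Fin d) ℝ | Z.PosSemidef ∧
      ∃ E : Matrix (Fin d) (Fin d) ℝ, E.PosSemidef ∧
        (Z + Zh - (2 : ℝ) • E).trace ≤ ρ ^ 2 ∧
        (Matrix.fromBlocks (psdSqrt Zh * Z * psdSqrt Zh) E E 1).PosSemidef} :=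
  gelbrich_ball_sdp_representation_general Zh ρ hρ
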